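/- arXiv:0812.4147 — 7 statements merged into one kernel-verified Lean document; each statement's English description precedes it below -/
import Mathlib

section
/- For every finite simple graph G and every vertex v of G, Q(G;x,y) = Q(G−v;x,y) + x(y−1)·Q(G−N[v];x,y) + x·Q(G/v;x,y). -/
open Finset
open scoped Classical

/-- The number of connected components of a graph. -/
noncomputable def numComponents {V : Type*} (G : SimpleGraph V) : ℕ :=
  Nat.card G.ConnectedComponent

/-- The subgraph component polynomial `Q(G;x,y) = ∑_{A ⊆ V} x^|A| y^{k(G[A])}`. -/
noncomputable def Q {V : Type*} [Fintype V] (G : SimpleGraph V) (x y : ℝ) : ℝ :=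
  ∑ A : Finset V, x ^ A.card * y ^ numComponents (G.induce (A : Set V))
/-- Vertex contraction: delete the vertex `v` and add edges between all pairs of
previously non-adjacent neighbors of `v`. -/
def contractVertex {V : Type*} (G : SimpleGraph V) (v : V) :
    SimpleGraph {u : V // u ≠ v} where
  Adj a b := a ≠ b ∧ (G.Adj a b ∨ (G.Adj a v ∧ G.Adj b v))
  symm := by
    constructor
    rintro a b ⟨hne, h | ⟨h1, h2⟩⟩
    · exact ⟨hne.symm, Or.inl h.symm⟩
    · exact ⟨hne.symm, Or.inr ⟨h2, h1⟩⟩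
  loopless := by constructor; rintro a ⟨h, -⟩; exact h rfl

/-! Split the subsets of `V` according to whether they contain `v`; those that do not give
`Q(G - v)`. For `A ⊆ V - v`, if `A` contains no neighbour of `v` then `v` is an extra isolated
component of `G[A + v]` and `(G/v)[A] = G[A]`. Otherwise the component of `v` in `G[A + v]` is
the union of `v` with the components of `G[A]` meeting `N(v)`, and these are exactly the
components that the clique on `N(v)` merges in `(G/v)[A]`, so `k(G[A + v]) = k((G/v)[A])`.
In both cases `x^{|A|+1} y^{k(G[A+v])} = x(y-1) [A ∩ N(v) = ∅] x^{|A|} y^{k(G[A])}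
+ x · x^{|A|} y^{k((G/v)[A])}`, and summing over `A` gives the recurrence. -/

open SimpleGraph

section Components

variable {α β : Type*}

theorem reachable_map_of_adj {G : SimpleGraph α} {H : SimpleGraph β} (f : α → β)
    (hf : ∀ a b, G.Adj a b → H.Reachable (f a) (f b)) {a b : α} (hab : G.Reachable a b) :
    H.Reachable (f a) (f b) := by
  rw [reachable_iff_reflTransGen] at hab ⊢
  exact Relation.ReflTransGen.lift' f
    (fun a b h => (reachable_iff_reflTransGen _ _).1 (hf a b h)) _ _ hab

theorem numComponents_eq_card_of_fibres (G : SimpleGraph α) (f : α → β)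
    (hsurj : Function.Surjective f) (hadj : ∀ a b, G.Adj a b → f a = f b)
    (hfibre : ∀ a b, f a = f b → G.Reachable a b) : numComponents G = Nat.card β := by
  have hconst (a b : α) (hab : G.Reachable a b) : f a = f b :=
    reachable_bot.1 (reachable_map_of_adj f (fun a b h => reachable_bot.2 (hadj a b h)) hab)
  refine Nat.card_congr (Equiv.ofBijective (Quot.lift f hconst) ⟨?_, ?_⟩)
  · exact ConnectedComponent.ind₂ fun a b h => ConnectedComponent.sound (hfibre a b h)
  · exact fun b => let ⟨a, ha⟩ := hsurj b; ⟨G.connectedComponentMk a, ha⟩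

theorem numComponents_induce_image {H : SimpleGraph α} {G : SimpleGraph β} (f : α ↪ β)
    {s : Set α} (hadj : ∀ a ∈ s, ∀ b ∈ s, H.Adj a b ↔ G.Adj (f a) (f b)) :
    numComponents (H.induce s) = numComponents (G.induce (f '' s)) :=
  Nat.card_congr (Iso.connectedComponentEquiv
    { toEquiv := Equiv.Set.image f s f.injective
      map_rel_iff' := fun {a b} => (hadj a a.2 b b.2).symm })

end Components

section DeletionContraction

variable {V : Type*} (G : SimpleGraph V) {v : V} {A : Set V}

theorem numComponents_induce_insert_of_isolated [Finite V] (hv : v ∉ A)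
    (hiso : ∀ w ∈ A, ¬ G.Adj v w) :
    numComponents (G.induce (insert v A)) = numComponents (G.induce A) + 1 := by
  have mem_of_ne (u : ↥(insert v A)) (hu : u.1 ≠ v) : u.1 ∈ A :=
    (Set.mem_insert_iff.1 u.2).resolve_left hu
  let ι : G.induce A →g G.induce (insert v A) := (induceHomOfLE G (Set.subset_insert v A)).toHom
  rw [numComponents.eq_def (G.induce A), ← Finite.card_option]
  refine numComponents_eq_card_of_fibres _ (fun u => if hu : u.1 = v then none
    else some ((G.induce A).connectedComponentMk ⟨u, mem_of_ne u hu⟩)) ?_ ?_ ?_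
  · rintro (_ | c)
    · exact ⟨⟨v, Set.mem_insert v A⟩, dif_pos rfl⟩
    · induction c using ConnectedComponent.ind with
      | h w => exact ⟨ι w, dif_neg (show (w : V) ≠ v from fun h => hv (h ▸ w.2))⟩
  · intro a b hab
    have hab : G.Adj a.1 b.1 := hab
    have ha : a.1 ≠ v := by
      rintro h
      rw [h] at hab
      exact hiso b (mem_of_ne b hab.ne.symm) hab
    have hb : b.1 ≠ v := by
      rintro h
      rw [h] at hab
      exact hiso a (mem_of_ne a hab.ne) hab.symm
    simp only [dif_neg ha, dif_neg hb, Option.some.injEq]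
    exact ConnectedComponent.connectedComponentMk_eq_of_adj hab
  · intro a b hab
    by_cases ha : a.1 = v <;> by_cases hb : b.1 = v <;>
      simp only [ha, hb, dif_pos, dif_neg, not_false_eq_true, reduceCtorEq] at hab
    · rw [Subtype.ext (ha.trans hb.symm)]
    · exact (ConnectedComponent.exact (Option.some_injective _ hab)).map ι

theorem contractVertex_induce_reachable_of_adj {s : Set {u // u ≠ v}} (p q : s)
    (hp : G.Adj p.1.1 v) (hq : G.Adj q.1.1 v) : ((contractVertex G v).induce s).Reachable p q := by
  by_cases hpq : p = q
  · rw [hpq]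
  · exact Adj.reachable (show (contractVertex G v).Adj p.1 q.1 from
      ⟨fun h => hpq (Subtype.ext h), Or.inr ⟨hp, hq⟩⟩)

theorem numComponents_induce_insert_eq_contractVertex {w : V} (hw : w ∈ A) (hvw : G.Adj v w) :
    numComponents (G.induce (insert v A)) =
      numComponents ((contractVertex G v).induce (Subtype.val ⁻¹' A)) := by
  set K := (contractVertex G v).induce (Subtype.val ⁻¹' A)
  have mem_of_ne (u : ↥(insert v A)) (hu : u.1 ≠ v) : u.1 ∈ A :=
    (Set.mem_insert_iff.1 u.2).resolve_left hu
  -- `v` is merged into its neighbour `w`.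
  let ψ (u : ↥(insert v A)) : ↥(Subtype.val ⁻¹' A : Set {u // u ≠ v}) :=
    if hu : u.1 = v then ⟨⟨w, hvw.ne.symm⟩, hw⟩ else ⟨⟨u, hu⟩, mem_of_ne u hu⟩
  let φ (p : ↥(Subtype.val ⁻¹' A : Set {u // u ≠ v})) : ↥(insert v A) :=
    ⟨p.1.1, Set.mem_insert_of_mem v p.2⟩
  have reachable_φ (p q) (hpq : K.Adj p q) : (G.induce (insert v A)).Reachable (φ p) (φ q) := by
    rcases hpq.2 with hpq | ⟨hp, hq⟩
    · exact Adj.reachable hpq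
    · let v' : ↥(insert v A) := ⟨v, Set.mem_insert v A⟩
      exact (Adj.reachable (show (G.induce (insert v A)).Adj (φ p) v' from hp)).trans
        (Adj.reachable (show (G.induce (insert v A)).Adj v' (φ q) from hq.symm))
  have reachable_φψ (u) : (G.induce (insert v A)).Reachable u (φ (ψ u)) := by
    by_cases hu : u.1 = v
    · have huw : G.Adj u.1 w := by rwa [hu]
      rw [show φ (ψ u) = ⟨w, Set.mem_insert_of_mem v hw⟩ from
        Subtype.ext (by simp [ψ, φ, hu])]
      exact Adj.reachable huw
    · simp [ψ, φ, hu]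
  refine numComponents_eq_card_of_fibres _ (fun u => K.connectedComponentMk (ψ u)) ?_ ?_ ?_
  · intro c
    induction c using ConnectedComponent.ind with
    | h p => exact ⟨φ p, by simp [ψ, φ, p.1.2]⟩
  · intro a b hab
    have hab : G.Adj a.1 b.1 := hab
    refine ConnectedComponent.sound ?_
    by_cases ha : a.1 = v
    · have hb : b.1 ≠ v := fun hb => hab.ne (ha.trans hb.symm)
      rw [ha] at hab
      simp only [ψ, dif_pos ha, dif_neg hb]
      exact contractVertex_induce_reachable_of_adj G _ _ hvw.symm hab.symm
    by_cases hb : b.1 = v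
    · rw [hb] at hab
      simp only [ψ, dif_neg ha, dif_pos hb]
      exact contractVertex_induce_reachable_of_adj G _ _ hab hvw.symm
    · simp only [ψ, dif_neg ha, dif_neg hb]
      exact Adj.reachable (show (contractVertex G v).Adj ⟨a, ha⟩ ⟨b, hb⟩ from
        ⟨fun h => hab.ne (Subtype.mk.inj h), Or.inl hab⟩)
  · intro a b hab
    have hψ := reachable_map_of_adj φ reachable_φ (ConnectedComponent.exact hab)
    exact (reachable_φψ a).trans (hψ.trans (reachable_φψ b).symm)

theorem numComponents_contractVertex_induce_of_isolated (hv : v ∉ A)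
    (hiso : ∀ w ∈ A, ¬ G.Adj v w) :
    numComponents ((contractVertex G v).induce (Subtype.val ⁻¹' A)) =
      numComponents (G.induce A) := by
  have hA : A ⊆ Set.range (Subtype.val : {u // u ≠ v} → V) :=
    fun a ha => ⟨⟨a, fun h => hv (h ▸ ha)⟩, rfl⟩
  rw [numComponents_induce_image (G := G) (Function.Embedding.subtype _),
    Function.Embedding.coe_subtype, Set.image_preimage_eq_of_subset hA]
  intro p hp q _
  refine ⟨fun h => h.2.resolve_right fun h' => hiso p hp h'.1.symm, fun h => ⟨?_, Or.inl h⟩⟩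
  exact fun hpq => h.ne (congrArg Subtype.val hpq)

end DeletionContraction

section Sums

variable {α M : Type*} [Fintype α] [AddCommMonoid M]

theorem sum_map_subtype_finset (p : α → Prop) [DecidablePred p] [Fintype {a // p a}]
    (f : Finset α → M) :
    ∑ B : Finset {a // p a}, f (B.map (Function.Embedding.subtype p)) =
      ∑ A with ∀ a ∈ A, p a, f A := by
  rw [Finset.sum_subtype (p := fun A : Finset α => ∀ a ∈ A, p a) _ (by simp)]
  exact Fintype.sum_equiv (Equiv.finsetSubtypeComm p) _ _ fun B => rfl

theorem sum_finset_eq_sum_add_insert [DecidableEq α] (v : α) (f : Finset α → M) :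
    ∑ A, f A = ∑ A with v ∉ A, (f A + f (insert v A)) := by
  have hfilter : ({A | v ∉ A} : Finset (Finset α)) = (univ.erase v).powerset := by
    ext A
    simp [subset_erase]
  rw [hfilter, sum_add_distrib, ← sum_powerset_insert (notMem_erase v univ),
    insert_erase (mem_univ v), powerset_univ]

end Sums

section SubgraphComponentPolynomial

variable {V : Type*} [Fintype V]

theorem Q_induce (G : SimpleGraph V) (S : Set V) [DecidablePred (· ∈ S)] [Fintype S]
    (x y : ℝ) :
    Q (G.induce S) x y =
      ∑ A with ∀ a ∈ A, a ∈ S, x ^ #A * y ^ numComponents (G.induce (A : Set V)) := by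
  rw [Q, ← sum_map_subtype_finset]
  refine sum_congr rfl fun B _ => ?_
  rw [card_map, coe_map, ← numComponents_induce_image (H := G.induce S) _ fun _ _ _ _ => Iff.rfl]

theorem Q_contractVertex (G : SimpleGraph V) (v : V) (x y : ℝ) :
    Q (contractVertex G v) x y = ∑ A with v ∉ A,
      x ^ #A * y ^ numComponents ((contractVertex G v).induce (Subtype.val ⁻¹' A)) := by
  rw [Q, filter_congr (q := fun A : Finset V => ∀ a ∈ A, a ≠ v) fun A _ => by simp,
    ← sum_map_subtype_finset]
  refine sum_congr rfl fun B _ => ?_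
  rw [card_map, coe_map, Function.Embedding.coe_subtype,
    Set.preimage_image_eq _ Subtype.val_injective]

end SubgraphComponentPolynomial

theorem stmt4 {V : Type*} [Fintype V] (G : SimpleGraph V) (v : V) (x y : ℝ) :
    Q G x y =
      Q (G.induce {u : V | u ≠ v}) x y
        + x * (y - 1) * Q (G.induce ((insert v (G.neighborSet v))ᶜ)) x y
        + x * Q (contractVertex G v) x y := by
  have hdel : Q (G.induce {u : V | u ≠ v}) x y =
      ∑ A with v ∉ A, x ^ #A * y ^ numComponents (G.induce (A : Set V)) := by
    rw [Q_induce]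
    exact sum_congr (filter_congr fun A _ => by simp) fun _ _ => rfl
  have hnbhd : Q (G.induce ((insert v (G.neighborSet v))ᶜ)) x y =
      ∑ A with v ∉ A, if ∀ w ∈ A, ¬ G.Adj v w
        then x ^ #A * y ^ numComponents (G.induce (A : Set V)) else 0 := by
    rw [Q_induce, ← sum_filter, filter_filter]
    exact sum_congr (filter_congr fun A _ => by simp [forall_and]) fun _ _ => rfl
  rw [Q, sum_finset_eq_sum_add_insert v, hdel, hnbhd, Q_contractVertex, mul_sum, mul_sum,
    ← sum_add_distrib, ← sum_add_distrib]
  refine sum_congr rfl fun A hA => ?_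
  have hv : v ∉ A := (mem_filter.1 hA).2
  rw [card_insert_of_notMem hv, coe_insert]
  split_ifs with hiso
  · rw [numComponents_induce_insert_of_isolated G hv hiso,
      numComponents_contractVertex_induce_of_isolated G hv hiso]
    ring
  · push Not at hiso
    obtain ⟨w, hw, hvw⟩ := hiso
    rw [numComponents_induce_insert_eq_contractVertex G hw hvw]
    ring
end

section
/- The subgraph component polynomials of paths satisfy the recurrence Q(P_n;x,y) = (1+x)·Q(P_{n−1};x,y) + x(y−1)·Q(P_{n−2};x,y) for n ≥ 2, with Q(P_0;x,y)=1 and Q(P_1;x,y)=1+xy. -/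
open Finset
open scoped Classical

/-!
The components of the subgraph of `P_n` induced by a vertex set `s` are the maximal runs of
consecutive vertices of `s`, one for each `i ∈ s` with `i - 1 ∉ s`. Encoding `s` by its
indicator word, `Q(P_n)` becomes a sum of `x^(#ones) y^(#runs)` over Boolean words of length
`n`. Appending `0` to a word keeps its weight; appending `1` multiplies it by `x`, or by `xy` if
the word ends in `0`, and the words of length `n - 1` ending in `0` have total weight
`Q(P_{n-2})`.
-/

open SimpleGraph

section RunStarts

variable {n : ℕ}

def IsRunStart (s : Set (Fin n)) (i : Fin n) : Prop :=
  i ∈ s ∧ ∀ j : Fin n, (j : ℕ) + 1 = i → j ∉ s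

variable {s : Set (Fin n)}

lemma exists_mem_of_walk_induce_pathGraph {u v : s} (p : ((pathGraph n).induce s).Walk u v)
    {k : ℕ} (huk : ((u : Fin n) : ℕ) ≤ k) (hkv : k ≤ ((v : Fin n) : ℕ)) :
    ∃ m ∈ s, (m : ℕ) = k := by
  induction p with
  | @nil a => exact ⟨a, a.2, by omega⟩
  | @cons a b _ hab _ ih =>
    rcases huk.eq_or_lt with rfl | hlt
    · exact ⟨a, a.2, rfl⟩
    · have : (pathGraph n).Adj a b := hab
      rw [pathGraph_adj] at this
      exact ih (by omega) hkv

lemma exists_isRunStart_reachable (v : s) :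
    ∃ u : s, IsRunStart s u ∧ ((pathGraph n).induce s).Reachable u v := by
  by_cases hv : IsRunStart s v
  · exact ⟨v, hv, .refl _⟩
  obtain ⟨j, hjv, hj⟩ : ∃ j : Fin n, (j : ℕ) + 1 = v ∧ j ∈ s := by
    simpa [IsRunStart, v.2] using hv
  have hadj : ((pathGraph n).induce s).Adj ⟨j, hj⟩ v := by
    simp [pathGraph_adj, hjv]
  obtain ⟨u, hu, hreach⟩ := exists_isRunStart_reachable ⟨j, hj⟩
  exact ⟨u, hu, hreach.trans hadj.reachable⟩
termination_by ((v : Fin n) : ℕ)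
decreasing_by omega

lemma IsRunStart.le_of_reachable {u v : s} (hv : IsRunStart s v)
    (h : ((pathGraph n).induce s).Reachable u v) : ((v : Fin n) : ℕ) ≤ (u : Fin n) := by
  by_contra! huv
  obtain ⟨p⟩ := h
  obtain ⟨m, hm, hmv⟩ := exists_mem_of_walk_induce_pathGraph p
    (k := ((v : Fin n) : ℕ) - 1) (by omega) (by omega)
  exact hv.2 m (by omega) hm

lemma IsRunStart.eq_of_reachable {u v : s} (hu : IsRunStart s u) (hv : IsRunStart s v)
    (h : ((pathGraph n).induce s).Reachable u v) : u = v :=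
  Subtype.ext <| Fin.ext <| le_antisymm (hu.le_of_reachable h.symm) (hv.le_of_reachable h)

theorem numComponents_induce_pathGraph (s : Set (Fin n)) :
    numComponents ((pathGraph n).induce s) = #{i | IsRunStart s i} := by
  let toComponent (i : {i // IsRunStart s i}) : ((pathGraph n).induce s).ConnectedComponent :=
    .mk _ ⟨i, i.2.1⟩
  have hbij : toComponent.Bijective := by
    refine ⟨fun i j hij => ?_, fun c => ?_⟩
    · have := IsRunStart.eq_of_reachable i.2 j.2 (ConnectedComponent.exact hij)
      exact Subtype.ext (by simpa using this)
    · obtain ⟨v, rfl⟩ := c.exists_rep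
      obtain ⟨u, hu, hreach⟩ := exists_isRunStart_reachable v
      exact ⟨⟨u, hu⟩, ConnectedComponent.sound hreach⟩
  rw [numComponents, ← Nat.card_eq_of_bijective toComponent hbij, Nat.card_eq_fintype_card,
    Fintype.card_subtype]

end RunStarts

section BoolVectors

variable {n : ℕ}

noncomputable def runStarts (f : Fin n → Bool) : Finset (Fin n) := {i | IsRunStart {j | f j} i}

noncomputable def runWeight (x y : ℝ) (f : Fin n → Bool) : ℝ :=
  x ^ #{i | f i} * y ^ #(runStarts f)

lemma card_filter_snoc (g : Fin n → Bool) (b : Bool) :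
    #{i | (Fin.snoc g b : Fin (n + 1) → Bool) i} = #{i | g i} + if b then 1 else 0 := by
  rw [card_filter, card_filter, Fin.sum_univ_castSucc]
  simp

lemma isRunStart_snoc_castSucc (g : Fin n → Bool) (b : Bool) (i : Fin n) :
    IsRunStart {j | (Fin.snoc g b : Fin (n + 1) → Bool) j} i.castSucc ↔
      IsRunStart {j | g j} i := by
  simp only [IsRunStart, Set.mem_ofPred_eq, Fin.snoc_castSucc, Fin.val_castSucc]
  refine and_congr_right fun _ => ⟨fun h j hj => ?_, fun h j hj => ?_⟩
  · simpa using h j.castSucc hj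
  · obtain ⟨j, rfl⟩ : ∃ j' : Fin n, j'.castSucc = j := ⟨⟨j, by omega⟩, rfl⟩
    simpa using h j hj

lemma not_isRunStart_snoc_false_last (g : Fin n → Bool) :
    ¬ IsRunStart {j | (Fin.snoc g false : Fin (n + 1) → Bool) j} (Fin.last n) := by
  simp [IsRunStart]

lemma isRunStart_snoc_true_last (g : Fin (n + 1) → Bool) :
    IsRunStart {j | (Fin.snoc g true : Fin (n + 2) → Bool) j} (Fin.last (n + 1)) ↔
      g (Fin.last n) = false := by
  simp only [IsRunStart, Set.mem_ofPred_eq, Fin.snoc_last, Fin.val_last, true_and,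
    Bool.not_eq_true]
  refine ⟨fun h => by simpa using h (Fin.last n).castSucc rfl, fun h j hj => ?_⟩
  obtain rfl : j = (Fin.last n).castSucc := Fin.ext (by simpa using hj)
  simpa using h

lemma card_runStarts_snoc (g : Fin n → Bool) (b : Bool) :
    #(runStarts (Fin.snoc g b : Fin (n + 1) → Bool)) = #(runStarts g) +
      if IsRunStart {j | (Fin.snoc g b : Fin (n + 1) → Bool) j} (Fin.last n) then 1 else 0 := by
  simp only [runStarts, card_filter, Fin.sum_univ_castSucc, isRunStart_snoc_castSucc]

lemma runWeight_snoc_false (x y : ℝ) (g : Fin n → Bool) :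
    runWeight x y (Fin.snoc g false : Fin (n + 1) → Bool) = runWeight x y g := by
  simp [runWeight, card_filter_snoc, card_runStarts_snoc, not_isRunStart_snoc_false_last]

lemma runWeight_snoc_true (x y : ℝ) (g : Fin (n + 1) → Bool) :
    runWeight x y (Fin.snoc g true : Fin (n + 2) → Bool) =
      x * (if g (Fin.last n) then 1 else y) * runWeight x y g := by
  rw [runWeight, runWeight, card_filter_snoc, card_runStarts_snoc, isRunStart_snoc_true_last]
  cases g (Fin.last n) <;> simp [pow_succ] <;> ring

lemma sum_fin_succ_bool {M : Type*} [AddCommMonoid M] (F : (Fin (n + 1) → Bool) → M) :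
    ∑ f, F f = ∑ g : Fin n → Bool, F (Fin.snoc g true) + ∑ g, F (Fin.snoc g false) := by
  rw [← (Fin.snocEquiv fun _ => Bool).sum_comp, Fintype.sum_prod_type, Fintype.sum_bool]
  rfl

noncomputable def pathSum (n : ℕ) (x y : ℝ) : ℝ := ∑ f : Fin n → Bool, runWeight x y f

lemma runWeight_fin_zero (x y : ℝ) (f : Fin 0 → Bool) : runWeight x y f = 1 := by
  simp [runWeight, runStarts]

lemma pathSum_zero (x y : ℝ) : pathSum 0 x y = 1 := by
  simp [pathSum, runWeight_fin_zero]

lemma pathSum_one (x y : ℝ) : pathSum 1 x y = 1 + x * y := by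
  rw [pathSum, sum_fin_succ_bool, Fintype.sum_unique, Fintype.sum_unique, runWeight_snoc_false,
    runWeight, card_filter_snoc, card_runStarts_snoc, runWeight_fin_zero]
  simp [IsRunStart, runStarts, Fin.snoc_zero, add_comm]

lemma sum_runWeight_last_false (x y : ℝ) :
    ∑ g : Fin (n + 1) → Bool, (if g (Fin.last n) then 0 else runWeight x y g) =
      pathSum n x y := by
  simp [sum_fin_succ_bool, runWeight_snoc_false, pathSum]

lemma pathSum_add_two (x y : ℝ) :
    pathSum (n + 2) x y = (1 + x) * pathSum (n + 1) x y + x * (y - 1) * pathSum n x y := by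
  have hsplit (g : Fin (n + 1) → Bool) : runWeight x y (Fin.snoc g true : Fin (n + 2) → Bool) =
      x * runWeight x y g + x * (y - 1) * (if g (Fin.last n) then 0 else runWeight x y g) := by
    rw [runWeight_snoc_true]
    split_ifs <;> ring
  rw [pathSum, sum_fin_succ_bool]
  simp only [hsplit, runWeight_snoc_false, sum_add_distrib, ← mul_sum, sum_runWeight_last_false]
  simp only [pathSum]
  ring

end BoolVectors

theorem Q_pathGraph_eq_pathSum (n : ℕ) (x y : ℝ) : Q (pathGraph n) x y = pathSum n x y := by
  have hbij : Function.Bijective fun A : Finset (Fin n) => fun i => decide (i ∈ A) := by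
    refine ⟨fun A B h => ?_, fun f => ⟨({i | f i} : Finset (Fin n)), by simp⟩⟩
    ext i
    simpa using congrFun h i
  refine Fintype.sum_bijective _ hbij _ _ fun A => ?_
  rw [numComponents_induce_pathGraph]
  simp [runWeight, runStarts]

theorem stmt8 (x y : ℝ) :
    Q (SimpleGraph.pathGraph 0) x y = 1 ∧
    Q (SimpleGraph.pathGraph 1) x y = 1 + x * y ∧
    ∀ n : ℕ, 2 ≤ n →
      Q (SimpleGraph.pathGraph n) x y =
        (1 + x) * Q (SimpleGraph.pathGraph (n - 1)) x y +
          x * (y - 1) * Q (SimpleGraph.pathGraph (n - 2)) x y := by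
  simp only [Q_pathGraph_eq_pathSum]
  refine ⟨pathSum_zero x y, pathSum_one x y, fun n hn => ?_⟩
  obtain ⟨m, rfl⟩ := Nat.exists_eq_add_of_le' hn
  exact pathSum_add_two x y
end

section
/- For every finite simple graph G, the degree of Q(G;x,y) in the variable y equals the independence number α(G) of G. -/
open Finset MvPolynomial
open scoped Classical

/-- The subgraph component polynomial as a bivariate polynomial:
`Q(G;x,y) = ∑_{A ⊆ V} x^|A| y^{k(G[A])}`, with `X 0 = x` and `X 1 = y`. -/
noncomputable def Qmv {V : Type*} [Fintype V] (G : SimpleGraph V) :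
    MvPolynomial (Fin 2) ℤ :=
  ∑ A : Finset V, X 0 ^ A.card * X 1 ^ numComponents (G.induce (A : Set V))

/-- The independence number of `G`: the maximum size of a set of pairwise
non-adjacent vertices. -/
noncomputable def indepNum {V : Type*} [Fintype V] (G : SimpleGraph V) : ℕ :=
  sSup {k : ℕ | ∃ A : Finset V, A.card = k ∧ (A : Set V).Pairwise fun u w => ¬ G.Adj u w}

/-!
All coefficients of `Q` are positive, so no monomials cancel and the `y`-degree is the largest
number `k(G[A])` of components of an induced subgraph. One vertex from each component of `G[A]`
gives an independent set of `G`, so `k(G[A]) ≤ α(G)`; conversely an independent set `A` induces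
the edgeless graph, which has `|A|` components.
-/

namespace MvPolynomial

variable {R σ ι : Type*} [CommSemiring R] [PartialOrder R] [IsOrderedCancelAddMonoid R]

theorem degreeOf_sum_monomial_of_pos (i : σ) (s : Finset ι) (m : ι → σ →₀ ℕ) {c : ι → R}
    (hc : ∀ a ∈ s, 0 < c a) :
    degreeOf i (∑ a ∈ s, monomial (m a) (c a)) = s.sup fun a => m a i := by
  classical
  refine le_antisymm ?_ (Finset.sup_le fun a ha => le_degreeOf_of_mem_support i ?_)
  · refine (degreeOf_sum_le i s _).trans (Finset.sup_mono_fun fun a ha => ?_)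
    rw [degreeOf_monomial_eq _ _ (hc a ha).ne']
  · have hcoeff : c a ≤ coeff (m a) (∑ b ∈ s, monomial (m b) (c b)) := by
      rw [coeff_sum]
      refine le_of_eq_of_le (by simp) (Finset.single_le_sum (f := fun b => coeff (m a)
        (monomial (m b) (c b))) (fun b hb => ?_) ha)
      rw [coeff_monomial]
      split_ifs
      exacts [(hc b hb).le, le_rfl]
    exact mem_support_iff.2 ((hc a ha).trans_le hcoeff).ne'

end MvPolynomial

namespace SimpleGraph

variable {V W : Type*}

theorem card_connectedComponent_bot :
    Nat.card (⊥ : SimpleGraph V).ConnectedComponent = Nat.card V :=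
  Nat.card_congr (Equiv.ofBijective _ ⟨fun _ _ h => reachable_bot.1 (ConnectedComponent.exact h),
    Quot.mk_surjective⟩).symm

theorem induce_eq_bot_of_isIndepSet {G : SimpleGraph V} {s : Set V} (hs : G.IsIndepSet s) :
    G.induce s = ⊥ := by
  ext u v
  simpa using fun h : G.Adj u v => hs u.2 v.2 h.ne h

theorem card_connectedComponent_le_indepNum [Finite V] (G : SimpleGraph V) :
    Nat.card G.ConnectedComponent ≤ G.indepNum := by
  classical
  have := Fintype.ofFinite V
  have hout : Function.Injective fun c : G.ConnectedComponent => c.out :=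
    Function.LeftInverse.injective Quot.out_eq
  let reps : Finset V := Finset.univ.map ⟨_, hout⟩
  have hreps : G.IsIndepSet reps := by
    simp only [reps, Finset.coe_map, Function.Embedding.coeFn_mk, Finset.coe_univ, Set.image_univ]
    rintro _ ⟨c, rfl⟩ _ ⟨c', rfl⟩ hne hadj
    refine hne (congrArg _ ?_)
    rw [← Quot.out_eq c, ← Quot.out_eq c']
    exact ConnectedComponent.connectedComponentMk_eq_of_adj hadj
  simpa [reps, Nat.card_eq_fintype_card] using hreps.card_le_indepNum

theorem Embedding.indepNum_le [Finite W] {G : SimpleGraph V} {H : SimpleGraph W} (f : G ↪g H) :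
    G.indepNum ≤ H.indepNum := by
  classical
  obtain ⟨s, hs⟩ := G.exists_isNIndepSet_indepNum
  rw [← hs.card_eq, ← Finset.card_map f.toEmbedding]
  refine IsIndepSet.card_le_indepNum ?_
  rw [Finset.coe_map]
  rintro _ ⟨u, hu, rfl⟩ _ ⟨v, hv, rfl⟩ hne hadj
  exact hs.isIndepSet hu hv (fun h => hne (h ▸ rfl)) (f.map_adj_iff.1 hadj)

end SimpleGraph

section SubgraphComponentPolynomial

variable {V : Type*} (G : SimpleGraph V)

theorem numComponents_induce_of_isIndepSet {A : Finset V} (hA : G.IsIndepSet A) :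
    numComponents (G.induce A) = #A := by
  rw [numComponents, SimpleGraph.induce_eq_bot_of_isIndepSet hA,
    SimpleGraph.card_connectedComponent_bot, Nat.card_coe_set_eq, Set.ncard_coe_finset]

variable [Fintype V]

theorem indepNum_eq_simpleGraph_indepNum : indepNum G = G.indepNum := by
  simp only [indepNum, SimpleGraph.indepNum, SimpleGraph.isNIndepSet_iff,
    SimpleGraph.isIndepSet_iff, and_comm]

theorem numComponents_induce_le_indepNum (s : Set V) :
    numComponents (G.induce s) ≤ G.indepNum :=
  (SimpleGraph.card_connectedComponent_le_indepNum _).trans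
    (SimpleGraph.Embedding.induce s).indepNum_le

theorem Qmv_eq_sum_monomial :
    Qmv G = ∑ A : Finset V,
      monomial (Finsupp.single 0 #A + Finsupp.single 1 (numComponents (G.induce A))) 1 := by
  simp only [Qmv, X_pow_eq_monomial, monomial_mul, one_mul]

theorem degreeOf_one_Qmv :
    (Qmv G).degreeOf 1 = univ.sup fun A : Finset V => numComponents (G.induce A) := by
  rw [Qmv_eq_sum_monomial, degreeOf_sum_monomial_of_pos _ _ _ fun _ _ => one_pos]
  simp

end SubgraphComponentPolynomial

theorem stmt10 {V : Type*} [Fintype V] (G : SimpleGraph V) :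
    (Qmv G).degreeOf 1 = indepNum G := by
  rw [degreeOf_one_Qmv, indepNum_eq_simpleGraph_indepNum]
  refine le_antisymm (Finset.sup_le fun A _ => numComponents_induce_le_indepNum G A) ?_
  obtain ⟨A, hA⟩ := G.exists_isNIndepSet_indepNum
  calc G.indepNum = numComponents (G.induce A) := by
        rw [numComponents_induce_of_isIndepSet G hA.isIndepSet, hA.card_eq]
    _ ≤ _ := Finset.le_sup (f := fun A : Finset V => numComponents (G.induce A)) (mem_univ A)
end

section
/- Let G be a finite simple graph and let Star_y be the looped star with center v_0 and y outer vertices, each vertex carrying a loop, with vertex weights α(v_0)=1 and α(v_i)=x for i≥1, and all edge weights 1. Then for every nonnegative integer y and real x, the weighted homomorphism partition function Z_{Star_y}(G) = \sum_{h: G → Star_y hom} \prod_{v∈V} α(h(v)) equals Q(G;x,y). -/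
open Finset
open scoped Classical

/-- Adjacency in the looped star `Star_y`: the center is `none`, the outer vertices are
`some i`; every vertex has a loop and the center is adjacent to all outer vertices. -/
def starAdj {y : ℕ} (a b : Option (Fin y)) : Prop := a = none ∨ b = none ∨ a = b

/-- The vertex weight `α`: weight 1 on the center, weight `x` on the outer vertices. -/
def starWeight {y : ℕ} (x : ℝ) (a : Option (Fin y)) : ℝ := if a = none then 1 else x

/-!
Sort the homomorphisms `h : G → Star_y` by the set `A` of vertices sent to outer vertices.
Each such `h` has weight `x ^ |A|`, and since two adjacent vertices of `A` must go to the same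
outer vertex, the homomorphisms with support `A` are exactly the maps sending each connected
component of `G[A]` to one of the `y` outer vertices.
-/

namespace SimpleGraph

variable {V : Type*} {G : SimpleGraph V}

theorem Reachable.eq_of_forall_adj {β : Sort*} {f : V → β}
    (hf : ∀ u v, G.Adj u v → f u = f v) {u v : V} (h : G.Reachable u v) : f u = f v := by
  rw [reachable_iff_reflTransGen] at h
  induction h with
  | refl => rfl
  | tail _ hadj ih => exact ih.trans (hf _ _ hadj)

end SimpleGraph

theorem starAdj_get_eq {y : ℕ} {a b : Option (Fin y)} (hab : starAdj a b) (ha : a.isSome)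
    (hb : b.isSome) : a.get ha = b.get hb := by
  rcases hab with rfl | rfl | rfl
  · simp at ha
  · simp at hb
  · rfl

section StarHom

open SimpleGraph

variable {V : Type*} (G : SimpleGraph V) {y : ℕ}

def IsStarHom (h : V → Option (Fin y)) : Prop := ∀ u v, G.Adj u v → starAdj (h u) (h v)

variable [Fintype V]

def starSupport (h : V → Option (Fin y)) : Finset V := {v | (h v).isSome}

@[simp]
theorem mem_starSupport {h : V → Option (Fin y)} {v : V} :
    v ∈ starSupport h ↔ (h v).isSome := by
  simp [starSupport]

theorem prod_starWeight (x : ℝ) (h : V → Option (Fin y)) :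
    ∏ v, starWeight x (h v) = x ^ (starSupport h).card := by
  rw [← prod_const, starSupport, prod_filter]
  refine prod_congr rfl fun v _ => ?_
  cases h v <;> simp [starWeight]

noncomputable def starHomSupportEquiv (A : Finset V) :
    {h : V → Option (Fin y) // IsStarHom G h ∧ starSupport h = A}
      ≃ ((G.induce (A : Set V)).ConnectedComponent → Fin y) where
  toFun h :=
    have hA (v : (A : Set V)) : (h.1 v).isSome := mem_starSupport.1 (by rw [h.2.2]; exact v.2)
    ConnectedComponent.lift (fun v => (h.1 v).get (hA v)) fun _ _ p _ =>
      p.reachable.eq_of_forall_adj fun (u v : (A : Set V)) huv =>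
        starAdj_get_eq (h.2.1 u v huv) (hA u) (hA v)
  invFun c :=
    ⟨fun v => if hv : v ∈ A then some (c (connectedComponentMk _ ⟨v, hv⟩)) else none,
    by
      intro u v huv
      by_cases hu : u ∈ A
      · by_cases hv : v ∈ A
        · have huv' : (G.induce (A : Set V)).Adj ⟨u, hu⟩ ⟨v, hv⟩ := huv
          simp [starAdj, hu, hv, ConnectedComponent.connectedComponentMk_eq_of_adj huv']
        · simp [starAdj, hv]
      · simp [starAdj, hu],
    by
      ext v
      by_cases hv : v ∈ A <;> simp [hv]⟩
  left_inv := by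
    rintro ⟨h, -, hsupp⟩
    ext1
    funext v
    dsimp only
    split_ifs with hv
    · simp
    · rwa [← hsupp, mem_starSupport, Option.not_isSome_iff_eq_none, eq_comm] at hv
  right_inv c := by
    funext C
    induction C using ConnectedComponent.ind
    simp

theorem card_starHom_starSupport_eq (A : Finset V) :
    #{h : V → Option (Fin y) | IsStarHom G h ∧ starSupport h = A}
      = y ^ numComponents (G.induce (A : Set V)) := by
  rw [← Fintype.card_subtype, Fintype.card_congr (starHomSupportEquiv G A), Fintype.card_fun,
    Fintype.card_fin, numComponents, Nat.card_eq_fintype_card]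

end StarHom

theorem stmt14 {V : Type*} [Fintype V] (G : SimpleGraph V) (x : ℝ) (y : ℕ) :
    (∑ h : V → Option (Fin y),
        if ∀ u v : V, G.Adj u v → starAdj (h u) (h v) then ∏ v : V, starWeight x (h v) else 0)
      = Q G x (y : ℝ) := by
  -- not `change`: the decidability instance of the `if` is not that of `IsStarHom`
  simp only [← IsStarHom.eq_1]
  rw [← sum_filter, ← sum_fiberwise _ starSupport, Q]
  refine sum_congr rfl fun A _ => ?_
  rw [sum_congr rfl fun h hh => by rw [prod_starWeight, (mem_filter.1 hh).2], sum_const,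
    filter_filter, card_starHom_starSupport_eq, nsmul_eq_mul]
  push_cast
  ring
end

section
/- Let G and H be finite simple graphs on disjoint vertex sets with |V(G)|=s and |V(H)|=t. Then Q(G∨H;x,y) = Q(G;x,y) + Q(H;x,y) + [(1+x)^s − 1]·[(1+x)^t − 1]·y − 1, where G∨H is the join of G and H. -/
open Finset
open scoped Classical

/-- The join of two simple graphs: the disjoint union together with all edges
between the two sides. -/
def joinGraph {V W : Type*} (G : SimpleGraph V) (H : SimpleGraph W) :
    SimpleGraph (V ⊕ W) where
  Adj a b :=
    match a, b with
    | .inl u, .inl v => G.Adj u v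
    | .inr u, .inr v => H.Adj u v
    | _, _ => True
  symm := ⟨by
    rintro (u | u) (v | v) h <;> simp_all [SimpleGraph.adj_comm]⟩
  loopless := ⟨by
    rintro (u | u) h
    · exact G.loopless.irrefl _ h
    · exact H.loopless.irrefl _ h⟩

/-
A vertex set of `G ∨ H` is a pair `(A, B)` with `A ⊆ V(G)`, `B ⊆ V(H)`. If `B = ∅` it induces a
copy of `G[A]`, if `A = ∅` a copy of `H[B]`, and otherwise a connected graph, since every vertex
of `A` is adjacent to every vertex of `B`. The first two cases sum to `Q G + Q H - 1` (the empty set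
is counted twice), the last to `(∑_{A ≠ ∅} x^|A|) (∑_{B ≠ ∅} x^|B|) y`.
-/

namespace SimpleGraph

variable {V W : Type*}

lemma numComponents_congr {G : SimpleGraph V} {H : SimpleGraph W} (e : G ≃g H) :
    numComponents G = numComponents H :=
  Nat.card_congr e.connectedComponentEquiv

lemma numComponents_induce_empty (G : SimpleGraph V) :
    numComponents (G.induce ((∅ : Finset V) : Set V)) = 0 := by
  simp [numComponents]

lemma Connected.numComponents_eq_one {G : SimpleGraph V} (h : G.Connected) :
    numComponents G = 1 :=
  Nat.card_eq_one_iff_unique.mpr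
    ⟨h.preconnected.subsingleton_connectedComponent, h.nonempty.map G.connectedComponentMk⟩

variable (G : SimpleGraph V) (H : SimpleGraph W)

@[simps]
def joinInl : G ↪g joinGraph G H :=
  { toFun := Sum.inl, inj' := Sum.inl_injective, map_rel_iff' := Iff.rfl }

@[simps]
def joinInr : H ↪g joinGraph G H :=
  { toFun := Sum.inr, inj' := Sum.inr_injective, map_rel_iff' := Iff.rfl }

lemma numComponents_joinGraph_induce_disjSum_empty (A : Finset V) :
    numComponents ((joinGraph G H).induce (A.disjSum (∅ : Finset W) : Set (V ⊕ W))) =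
      numComponents (G.induce (A : Set V)) := by
  have hrange : (A.disjSum (∅ : Finset W) : Set (V ⊕ W)) =
      Set.range ((joinInl G H).comp (Embedding.induce (A : Set V))) := by
    ext (v | w) <;> simp
  rw [hrange]
  exact numComponents_congr (Embedding.isoInduceRange _).symm

lemma numComponents_joinGraph_induce_empty_disjSum (B : Finset W) :
    numComponents ((joinGraph G H).induce ((∅ : Finset V).disjSum B : Set (V ⊕ W))) =
      numComponents (H.induce (B : Set W)) := by
  have hrange : ((∅ : Finset V).disjSum B : Set (V ⊕ W)) =
      Set.range ((joinInr G H).comp (Embedding.induce (B : Set W))) := by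
    ext (v | w) <;> simp
  rw [hrange]
  exact numComponents_congr (Embedding.isoInduceRange _).symm

lemma connected_joinGraph_induce {S : Set (V ⊕ W)} {a : V} {b : W}
    (ha : .inl a ∈ S) (hb : .inr b ∈ S) : ((joinGraph G H).induce S).Connected := by
  have adj : ∀ {v w} (hv : .inl v ∈ S) (hw : .inr w ∈ S),
      ((joinGraph G H).induce S).Adj ⟨.inl v, hv⟩ ⟨.inr w, hw⟩ := fun _ _ => trivial
  refine (connected_iff_exists_forall_reachable _).mpr ⟨⟨.inl a, ha⟩, ?_⟩
  rintro ⟨v | w, hv⟩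
  · exact (adj ha hb).reachable.trans (adj hv hb).symm.reachable
  · exact (adj ha hv).reachable

-- The indicator form makes each summand factor once summed over `A` and `B`.
lemma joinGraph_term_eq (x y : ℝ) (A : Finset V) (B : Finset W) :
    x ^ (#A + #B) * y ^ numComponents ((joinGraph G H).induce (A.disjSum B : Set (V ⊕ W))) =
      (if B = ∅ then x ^ #A * y ^ numComponents (G.induce (A : Set V)) else 0) +
      (if A = ∅ then x ^ #B * y ^ numComponents (H.induce (B : Set W)) else 0) -
      (if A = ∅ ∧ B = ∅ then 1 else 0) +
      (x ^ #A - if A = ∅ then 1 else 0) * (x ^ #B - if B = ∅ then 1 else 0) * y := by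
  rcases B.eq_empty_or_nonempty with rfl | ⟨b, hb⟩
  · rw [numComponents_joinGraph_induce_disjSum_empty]
    rcases A.eq_empty_or_nonempty with rfl | hA
    · simp [numComponents_induce_empty G, numComponents_induce_empty H]
    · simp [hA.ne_empty]
  rcases A.eq_empty_or_nonempty with rfl | ⟨a, ha⟩
  · rw [numComponents_joinGraph_induce_empty_disjSum]
    simp [ne_empty_of_mem hb]
  have hconn := connected_joinGraph_induce G H (S := (A.disjSum B : Set (V ⊕ W)))
    (by simpa using ha) (by simpa using hb)
  simp [hconn.numComponents_eq_one, ne_empty_of_mem ha, ne_empty_of_mem hb, pow_add]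

end SimpleGraph

section

variable {V W : Type*} [Fintype V] [Fintype W]

lemma sum_pow_card {R : Type*} [CommSemiring R] (x : R) : ∑ A : Finset V, x ^ #A = (1 + x) ^ Fintype.card V := by
  simpa [add_comm] using Fintype.sum_pow_mul_eq_add_pow V x 1

lemma Q_joinGraph_eq_sum (G : SimpleGraph V) (H : SimpleGraph W) (x y : ℝ) :
    Q (joinGraph G H) x y = ∑ A : Finset V, ∑ B : Finset W,
      x ^ (#A + #B) * y ^ numComponents ((joinGraph G H).induce (A.disjSum B : Set (V ⊕ W))) := by
  rw [Q, ← Fintype.sum_prod_type']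
  exact (Fintype.sum_equiv sumEquiv.symm.toEquiv _ _ fun p => by simp [card_disjSum]).symm

end

theorem stmt15 {V W : Type*} [Fintype V] [Fintype W]
    (G : SimpleGraph V) (H : SimpleGraph W) (x y : ℝ) :
    Q (joinGraph G H) x y =
      Q G x y + Q H x y +
        ((1 + x) ^ Fintype.card V - 1) * ((1 + x) ^ Fintype.card W - 1) * y - 1 := by
  rw [Q_joinGraph_eq_sum]
  simp only [SimpleGraph.joinGraph_term_eq, sum_add_distrib, sum_sub_distrib, ite_and, sum_ite_eq',
    mem_univ, ↓reduceIte, sum_ite_irrel, sum_const_zero, ← sum_mul, ← mul_sum, sum_pow_card, Q]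
  ring
end

section
/- For the complete bipartite graph K_{s,t}, Q(K_{s,t};x,y) = (1+xy)^s + (1+xy)^t + [(1+x)^s − 1]·[(1+x)^t − 1]·y − 1. -/
open Finset
open scoped Classical

/-!
Split a vertex set of `K_{V,W}` as `B ⊔ C` with `B ⊆ V`, `C ⊆ W`. The induced subgraph is
connected when `B` and `C` are both nonempty (every vertex of one side sees every vertex of the
other) and edgeless otherwise, so it has `1` or `|B| + |C|` components. Hence `Q` is the sum of
`(xy)^|B| (xy)^|C|` over all pairs, corrected by `x^|B| x^|C| y - (xy)^|B| (xy)^|C|` on the pairs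
with both sides nonempty, and each of these sums factors into binomial sums
`∑_B z^|B| = (1 + z)^|V|`.
-/

open SimpleGraph

section PowCard

variable {R : Type*} [CommRing R] (α : Type*) [Fintype α]

lemma sum_pow_card_finset (z : R) : ∑ B : Finset α, z ^ #B = (1 + z) ^ Fintype.card α := by
  simpa [add_comm z] using Fintype.sum_pow_mul_eq_add_pow α z (1 : R)

lemma sum_pow_card_finset_nonempty (z : R) :
    ∑ B : Finset α with B.Nonempty, z ^ #B = (1 + z) ^ Fintype.card α - 1 := by
  rw [← sum_pow_card_finset, ← sum_filter_add_sum_filter_not univ Finset.Nonempty]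
  simp [not_nonempty_iff_eq_empty, filter_eq']

end PowCard

lemma numComponents_bot (V : Type*) : numComponents (⊥ : SimpleGraph V) = Nat.card V :=
  (Nat.card_eq_of_bijective _ ⟨fun _ _ h => reachable_bot.mp (ConnectedComponent.exact h),
    fun c => c.ind fun v => ⟨v, rfl⟩⟩).symm

lemma SimpleGraph.Connected.numComponents_eq_one_s16 {V : Type*} {G : SimpleGraph V}
    (h : G.Connected) : numComponents G = 1 := by
  have := h.nonempty
  have := h.preconnected.subsingleton_connectedComponent
  exact Nat.card_eq_one_iff_unique.mpr ⟨inferInstance, inferInstance⟩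

section CompleteBipartite

variable {V W : Type*} {S : Set (V ⊕ W)}

lemma completeBipartiteGraph_induce_eq_bot
    (hS : ∀ u ∈ S, ∀ v ∈ S, u.isLeft = v.isLeft) :
    (completeBipartiteGraph V W).induce S = ⊥ := by
  ext ⟨u, hu⟩ ⟨v, hv⟩
  have := hS u hu v hv
  cases u <;> cases v <;> simp_all [completeBipartiteGraph_adj]

lemma completeBipartiteGraph_induce_connected {a : V} {b : W}
    (ha : .inl a ∈ S) (hb : .inr b ∈ S) :
    ((completeBipartiteGraph V W).induce S).Connected := by
  set G := (completeBipartiteGraph V W).induce S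
  have adj_inl_inr (v : V) (w : W) (hv : .inl v ∈ S) (hw : .inr w ∈ S) :
      G.Adj ⟨.inl v, hv⟩ ⟨.inr w, hw⟩ := by
    simp [G, completeBipartiteGraph_adj]
  refine (connected_iff_exists_forall_reachable G).mpr ⟨⟨.inl a, ha⟩, ?_⟩
  rintro ⟨v | w, hu⟩
  · exact (adj_inl_inr a b ha hb).reachable.trans (adj_inl_inr v b hu hb).reachable.symm
  · exact (adj_inl_inr a w ha hu).reachable

lemma numComponents_completeBipartiteGraph_induce_disjSum (B : Finset V) (C : Finset W) :
    numComponents ((completeBipartiteGraph V W).induce (B.disjSum C : Set (V ⊕ W))) =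
      if B.Nonempty ∧ C.Nonempty then 1 else #B + #C := by
  split_ifs with h
  · obtain ⟨⟨a, ha⟩, ⟨b, hb⟩⟩ := h
    exact (completeBipartiteGraph_induce_connected (by simpa) (by simpa)).numComponents_eq_one_s16
  · rw [completeBipartiteGraph_induce_eq_bot, numComponents_bot, Nat.card_coe_set_eq,
      Set.ncard_coe_finset, card_disjSum]
    rw [not_and_or, not_nonempty_iff_eq_empty, not_nonempty_iff_eq_empty] at h
    rintro (u | u) hu (v | v) hv <;> rcases h with rfl | rfl <;> simp_all

end CompleteBipartite

lemma Q_completeBipartiteGraph (V W : Type*) [Fintype V] [Fintype W] (x y : ℝ) :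
    Q (completeBipartiteGraph V W) x y =
      (1 + x * y) ^ Fintype.card V + (1 + x * y) ^ Fintype.card W +
        ((1 + x) ^ Fintype.card V - 1) * ((1 + x) ^ Fintype.card W - 1) * y - 1 := by
  have split_term (B : Finset V) (C : Finset W) :
      x ^ (#B + #C) * y ^ (if B.Nonempty ∧ C.Nonempty then 1 else #B + #C) =
        (x * y) ^ #B * (x * y) ^ #C +
          if B.Nonempty ∧ C.Nonempty then x ^ #B * x ^ #C * y - (x * y) ^ #B * (x * y) ^ #C
          else 0 := by
    split_ifs <;> ring
  calc Q (completeBipartiteGraph V W) x y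
      = ∑ B : Finset V, ∑ C : Finset W,
          x ^ (#B + #C) * y ^ (if B.Nonempty ∧ C.Nonempty then 1 else #B + #C) := by
        rw [Q, ← sumEquiv.symm.toEquiv.sum_comp, Fintype.sum_prod_type]
        simp only [OrderIso.coe_toEquiv, sumEquiv_symm_apply, card_disjSum,
          numComponents_completeBipartiteGraph_induce_disjSum]
    _ = (∑ B : Finset V, (x * y) ^ #B) * (∑ C : Finset W, (x * y) ^ #C) +
          ((∑ B : Finset V with B.Nonempty, x ^ #B) *
              (∑ C : Finset W with C.Nonempty, x ^ #C) * y -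
            (∑ B : Finset V with B.Nonempty, (x * y) ^ #B) *
            (∑ C : Finset W with C.Nonempty, (x * y) ^ #C)) := by
        simp only [split_term, sum_add_distrib, sum_mul_sum]
        congr 1
        simp only [sum_mul, ← sum_sub_distrib]
        simp only [sum_filter, ite_and]
        refine sum_congr rfl fun B _ => ?_
        split_ifs <;> simp
    _ = _ := by
        simp only [sum_pow_card_finset, sum_pow_card_finset_nonempty]
        ring

theorem stmt16 (s t : ℕ) (x y : ℝ) :
    Q (completeBipartiteGraph (Fin s) (Fin t)) x y =
      (1 + x * y) ^ s + (1 + x * y) ^ t +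
        ((1 + x) ^ s - 1) * ((1 + x) ^ t - 1) * y - 1 := by
  simpa using Q_completeBipartiteGraph (Fin s) (Fin t) x y
end

section
/- Let v be an articulation (cut vertex) of a graph G, and let H and K be subgraphs with G = H ∪ K and H ∩ K = ({v},∅). Then xy·Q(G;x,y) = xy·Q(H−v;x,y)·Q(K−v;x,y) + [Q(H;x,y) − Q(H−v;x,y)]·[Q(K;x,y) − Q(K−v;x,y)]. -/
open Finset
open scoped Classical

/-!
Write `Q(G) = ∑_T w(T)` with `w(T) = x^|T| y^{k(G[T])}`, and split each `T ⊆ V` as `T = P ∪ R`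
with `P ⊆ V(H)`, `R ⊆ V(K)`. If `v ∉ T`, then `G[T]` is the disjoint union of `G[P]` and `G[R]`,
so `w(T) = w(P) w(R)`. If `v ∈ T`, then `G[T]` is `G[P]` and `G[R]` glued at `v`, so
`|P| + |R| = |T| + 1` and `k(G[P]) + k(G[R]) = k(G[T]) + 1`, i.e. `xy w(T) = w(P) w(R)`.
Summing over the first kind of `T` gives `Q(H-v) Q(K-v)`, and over the second kind
`(Q(H) - Q(H-v)) (Q(K) - Q(K-v))`.
-/

@[to_additive]
theorem Finset.prod_powerset_union_of_disjoint {α β : Type*} [DecidableEq α] [CommMonoid β]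
    {s t : Finset α} (hst : Disjoint s t) (f : Finset α → β) :
    ∏ u ∈ (s ∪ t).powerset, f u = ∏ p ∈ s.powerset, ∏ q ∈ t.powerset, f (p ∪ q) := by
  rw [← prod_product']
  refine prod_nbij' (fun u => (u ∩ s, u ∩ t)) (fun pq => pq.1 ∪ pq.2) ?_ ?_ ?_ ?_ ?_
  · intro u _
    simp
  · intro pq hpq
    simp only [mem_product, mem_powerset] at hpq ⊢
    exact union_subset_union hpq.1 hpq.2
  · intro u hu
    rw [← inter_union_distrib_left, inter_eq_left.mpr (mem_powerset.mp hu)]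
  · rintro ⟨p, q⟩ hpq
    simp only [mem_product, mem_powerset] at hpq
    have hpt : p ∩ t = ∅ := disjoint_iff_inter_eq_empty.mp (hst.mono_left hpq.1)
    have hqs : q ∩ s = ∅ := disjoint_iff_inter_eq_empty.mp (hst.mono_right hpq.2).symm
    simp only [union_inter_distrib_right, inter_eq_left.mpr hpq.1, inter_eq_left.mpr hpq.2, hpt,
      hqs, union_empty, empty_union]
  · intro u hu
    rw [← inter_union_distrib_left, inter_eq_left.mpr (mem_powerset.mp hu)]

theorem mul_sum_powerset_insert_union {α R : Type*} [DecidableEq α] [CommRing R]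
    {a b : Finset α} {v : α} (hva : v ∉ a) (hvb : v ∉ b) (hab : Disjoint a b)
    (f : Finset α → R) (c : R)
    (hunion : ∀ p ⊆ a, ∀ q ⊆ b, f (p ∪ q) = f p * f q)
    (hinsert : ∀ p ⊆ a, ∀ q ⊆ b, c * f (insert v (p ∪ q)) = f (insert v p) * f (insert v q)) :
    c * ∑ t ∈ (insert v (a ∪ b)).powerset, f t =
      c * (∑ p ∈ a.powerset, f p) * (∑ q ∈ b.powerset, f q) +
        (∑ p ∈ (insert v a).powerset, f p - ∑ p ∈ a.powerset, f p) *
          (∑ q ∈ (insert v b).powerset, f q - ∑ q ∈ b.powerset, f q) := by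
  have hsplit : ∑ t ∈ (a ∪ b).powerset, f t =
      (∑ p ∈ a.powerset, f p) * ∑ q ∈ b.powerset, f q := by
    rw [sum_powerset_union_of_disjoint hab, sum_mul_sum]
    exact sum_congr rfl fun p hp => sum_congr rfl fun q hq =>
      hunion p (mem_powerset.mp hp) q (mem_powerset.mp hq)
  have hsplit_insert : c * ∑ t ∈ (a ∪ b).powerset, f (insert v t) =
      (∑ p ∈ a.powerset, f (insert v p)) * ∑ q ∈ b.powerset, f (insert v q) := by
    rw [sum_powerset_union_of_disjoint hab, sum_mul_sum, mul_sum]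
    refine sum_congr rfl fun p hp => ?_
    rw [mul_sum]
    exact sum_congr rfl fun q hq => hinsert p (mem_powerset.mp hp) q (mem_powerset.mp hq)
  rw [sum_powerset_insert (by simp [hva, hvb]), sum_powerset_insert hva, sum_powerset_insert hvb,
    mul_add, hsplit, hsplit_insert]
  ring

namespace SimpleGraph

variable {V : Type*} {G : SimpleGraph V}

def ConnectedComponent.liftAdj {β : Sort*} (f : V → β) (h : ∀ u w, G.Adj u w → f u = f w) :
    G.ConnectedComponent → β :=
  ConnectedComponent.lift f fun _ _ p hp => by
    clear hp
    induction p with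
    | nil => rfl
    | cons hadj _ ih => exact (h _ _ hadj).trans ih

@[simp]
theorem ConnectedComponent.liftAdj_mk {β : Sort*} {f : V → β} {h : ∀ u w, G.Adj u w → f u = f w}
    (u : V) : ConnectedComponent.liftAdj f h (G.connectedComponentMk u) = f u :=
  rfl

variable (G) {S T : Set V} {v : V}

noncomputable def induceUnionConnectedComponentEquiv (hST : Disjoint S T)
    (hadj : ∀ u ∈ S, ∀ w ∈ T, ¬G.Adj u w) :
    (G.induce (S ∪ T)).ConnectedComponent ≃
      (G.induce S).ConnectedComponent ⊕ (G.induce T).ConnectedComponent where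
  toFun := ConnectedComponent.liftAdj
    (fun u => if hu : ↑u ∈ S then .inl ((G.induce S).connectedComponentMk ⟨u, hu⟩)
      else .inr ((G.induce T).connectedComponentMk ⟨u, u.2.resolve_left hu⟩))
    (by
      intro u w huw
      wlog huS : ↑u ∈ S generalizing u w
      · by_cases hwS : ↑w ∈ S
        · exact (this w u huw.symm hwS).symm
        simp only [dif_neg huS, dif_neg hwS]
        exact congrArg _ (ConnectedComponent.connectedComponentMk_eq_of_adj huw)
      by_cases hwS : ↑w ∈ S
      · simp only [dif_pos huS, dif_pos hwS]
        exact congrArg _ (ConnectedComponent.connectedComponentMk_eq_of_adj huw)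
      · exact absurd huw (hadj u huS w (w.2.resolve_left hwS)))
  invFun := Sum.elim (.map (G.induceHomOfLE Set.subset_union_left).toHom)
    (.map (G.induceHomOfLE Set.subset_union_right).toHom)
  left_inv := by
    refine ConnectedComponent.ind fun u => ?_
    by_cases hu : ↑u ∈ S
    · simp only [ConnectedComponent.liftAdj_mk, dif_pos hu, Sum.elim_inl,
        ConnectedComponent.map_mk]
      rfl
    · simp only [ConnectedComponent.liftAdj_mk, dif_neg hu, Sum.elim_inr,
        ConnectedComponent.map_mk]
      rfl
  right_inv := by
    rintro (c | c) <;> induction c using ConnectedComponent.ind with | h u => ?_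
    · exact dif_pos u.2
    · exact dif_neg (hST.notMem_of_mem_right u.2)

/-- The component of `v` in `G[T]` is absorbed into the component of `v` in `G[S]`. -/
noncomputable def induceUnionConnectedComponentEquivOfInter (hvS : v ∈ S) (hvT : v ∈ T)
    (hST : S ∩ T ⊆ {v}) (hadj : ∀ u ∈ S, ∀ w ∈ T, G.Adj u w → u = v ∨ w = v) :
    (G.induce (S ∪ T)).ConnectedComponent ≃
      (G.induce S).ConnectedComponent ⊕
        {c : (G.induce T).ConnectedComponent // c ≠ (G.induce T).connectedComponentMk ⟨v, hvT⟩}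
    where
  toFun := ConnectedComponent.liftAdj
    (fun u => if hu : ↑u ∈ S then .inl ((G.induce S).connectedComponentMk ⟨u, hu⟩)
      else if hc : (G.induce T).connectedComponentMk ⟨u, u.2.resolve_left hu⟩ =
          (G.induce T).connectedComponentMk ⟨v, hvT⟩ then
        .inl ((G.induce S).connectedComponentMk ⟨v, hvS⟩)
      else .inr ⟨_, hc⟩)
    (by
      intro u w huw
      wlog huS : ↑u ∈ S generalizing u w
      · by_cases hwS : ↑w ∈ S
        · exact (this w u huw.symm hwS).symm
        have hc : (G.induce T).connectedComponentMk ⟨u, u.2.resolve_left huS⟩ =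
            (G.induce T).connectedComponentMk ⟨w, w.2.resolve_left hwS⟩ :=
          ConnectedComponent.connectedComponentMk_eq_of_adj huw
        simp only [dif_neg huS, dif_neg hwS, hc]
      by_cases hwS : ↑w ∈ S
      · simp only [dif_pos huS, dif_pos hwS]
        exact congrArg _ (ConnectedComponent.connectedComponentMk_eq_of_adj huw)
      obtain rfl : (u : V) = v :=
        (hadj u huS w (w.2.resolve_left hwS) huw).resolve_right fun h => hwS (h ▸ hvS)
      have hc : (G.induce T).connectedComponentMk ⟨w, w.2.resolve_left hwS⟩ =
          (G.induce T).connectedComponentMk ⟨u, hvT⟩ :=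
        ConnectedComponent.connectedComponentMk_eq_of_adj huw.symm
      rw [dif_pos huS, dif_neg hwS, dif_pos hc])
  invFun := Sum.elim (.map (G.induceHomOfLE Set.subset_union_left).toHom)
    (fun c => c.1.map (G.induceHomOfLE Set.subset_union_right).toHom)
  left_inv := by
    refine ConnectedComponent.ind fun u => ?_
    by_cases hu : ↑u ∈ S
    · simp only [ConnectedComponent.liftAdj_mk, dif_pos hu, Sum.elim_inl,
        ConnectedComponent.map_mk]
      rfl
    by_cases hc : (G.induce T).connectedComponentMk ⟨u, u.2.resolve_left hu⟩ =
        (G.induce T).connectedComponentMk ⟨v, hvT⟩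
    · simp only [ConnectedComponent.liftAdj_mk, dif_neg hu, dif_pos hc, Sum.elim_inl,
        ConnectedComponent.map_mk]
      exact (congrArg (ConnectedComponent.map (G.induceHomOfLE Set.subset_union_right).toHom)
        hc).symm
    · simp only [ConnectedComponent.liftAdj_mk, dif_neg hu, dif_neg hc, Sum.elim_inr,
        ConnectedComponent.map_mk]
      rfl
  right_inv := by
    rintro (c | ⟨c, hc⟩)
    · induction c using ConnectedComponent.ind with | h u => exact dif_pos u.2
    · induction c using ConnectedComponent.ind with | h u => ?_
      have hu : ↑u ∉ S := fun hu => hc (congrArg _ (Subtype.ext (hST ⟨hu, u.2⟩)))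
      change dite _ _ _ = _
      split_ifs with h h'
      · exact absurd h hu
      · exact absurd h' hc
      · rfl

end SimpleGraph

section

variable {V : Type*}

theorem numComponents_congr {W : Type*} {G : SimpleGraph V} {H : SimpleGraph W} (e : G ≃g H) :
    numComponents G = numComponents H :=
  Nat.card_congr e.connectedComponentEquiv

theorem numComponents_induce_induce (G : SimpleGraph V) (s : Set V) (A : Set s) :
    numComponents ((G.induce s).induce A) = numComponents (G.induce (Subtype.val '' A)) := by
  let e := (SimpleGraph.Embedding.induce (G := G) s).comp (SimpleGraph.Embedding.induce A)
  have hrange : Set.range e = Subtype.val '' A := by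
    change Set.range (Subtype.val ∘ Subtype.val) = _
    rw [Set.range_comp, Subtype.range_coe]
  rw [numComponents_congr e.isoInduceRange, hrange]

section

variable [Finite V] (G : SimpleGraph V) {S T : Set V} {v : V}

theorem numComponents_induce_union (hST : Disjoint S T) (hadj : ∀ u ∈ S, ∀ w ∈ T, ¬G.Adj u w) :
    numComponents (G.induce (S ∪ T)) =
      numComponents (G.induce S) + numComponents (G.induce T) := by
  rw [numComponents, Nat.card_congr (G.induceUnionConnectedComponentEquiv hST hadj), Nat.card_sum]
  rfl

theorem numComponents_induce_union_add_one (hvS : v ∈ S) (hvT : v ∈ T) (hST : S ∩ T ⊆ {v})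
    (hadj : ∀ u ∈ S, ∀ w ∈ T, G.Adj u w → u = v ∨ w = v) :
    numComponents (G.induce (S ∪ T)) + 1 =
      numComponents (G.induce S) + numComponents (G.induce T) := by
  have hT := Nat.card_congr (Equiv.optionSubtypeNe ((G.induce T).connectedComponentMk ⟨v, hvT⟩))
  rw [Finite.card_option] at hT
  rw [numComponents,
    Nat.card_congr (G.induceUnionConnectedComponentEquivOfInter hvS hvT hST hadj), Nat.card_sum,
    numComponents, numComponents, ← hT, add_assoc]

end

noncomputable def componentWeight (G : SimpleGraph V) (x y : ℝ) (T : Finset V) : ℝ :=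
  x ^ #T * y ^ numComponents (G.induce (T : Set V))

theorem Q_eq_sum_componentWeight [Fintype V] (G : SimpleGraph V) (x y : ℝ) :
    Q G x y = ∑ T ∈ (univ : Finset V).powerset, componentWeight G x y T := by
  rw [powerset_univ]
  rfl

theorem Q_induce_eq_sum_componentWeight (G : SimpleGraph V) (W : Set V) [Fintype W] (x y : ℝ) :
    Q (G.induce W) x y = ∑ t ∈ W.toFinset.powerset, componentWeight G x y t := by
  refine sum_nbij' (fun A => A.map (Function.Embedding.subtype _)) (fun t => t.subtype (· ∈ W))
    ?_ ?_ ?_ ?_ ?_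
  · intro A _
    rw [mem_powerset]
    intro u hu
    obtain ⟨a, _, rfl⟩ := mem_map.mp hu
    exact Set.mem_toFinset.mpr a.2
  · intro t _
    exact mem_univ _
  · intro A _
    ext a
    simp
  · intro t ht
    rw [subtype_map, filter_true_of_mem fun u hu => Set.mem_toFinset.mp (mem_powerset.mp ht hu)]
  · intro A _
    rw [componentWeight, card_map, coe_map, numComponents_induce_induce]
    rfl

theorem Q_induce_congr (G : SimpleGraph V) {W W' : Set V} [Fintype W] [Fintype W']
    (h : W = W') (x y : ℝ) : Q (G.induce W) x y = Q (G.induce W') x y := by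
  subst h
  congr
  exact Subsingleton.elim _ _

section

variable [Finite V] (G : SimpleGraph V) (x y : ℝ) {p q : Finset V} {v : V}

theorem componentWeight_union (hpq : Disjoint p q) (hadj : ∀ u ∈ p, ∀ w ∈ q, ¬G.Adj u w) :
    componentWeight G x y (p ∪ q) = componentWeight G x y p * componentWeight G x y q := by
  rw [componentWeight, card_union_of_disjoint hpq, coe_union,
    numComponents_induce_union G (disjoint_coe.mpr hpq) hadj, componentWeight, componentWeight]
  ring

theorem componentWeight_insert_union (hvp : v ∉ p) (hvq : v ∉ q) (hpq : Disjoint p q)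
    (hadj : ∀ u ∈ p, ∀ w ∈ q, ¬G.Adj u w) :
    x * y * componentWeight G x y (insert v (p ∪ q)) =
      componentWeight G x y (insert v p) * componentWeight G x y (insert v q) := by
  have hcard : #(insert v (p ∪ q)) + 1 = #(insert v p) + #(insert v q) := by
    rw [card_insert_of_notMem (by simp [hvp, hvq]), card_insert_of_notMem hvp,
      card_insert_of_notMem hvq, card_union_of_disjoint hpq]
    ring
  have hcomp : numComponents (G.induce (insert v (p ∪ q) : Finset V)) + 1 =
      numComponents (G.induce (insert v p : Finset V)) +
        numComponents (G.induce (insert v q : Finset V)) := by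
    have hunion : ((insert v (p ∪ q) : Finset V) : Set V) = ↑(insert v p) ∪ ↑(insert v q) := by
      ext
      simp only [coe_insert, coe_union, Set.mem_union, Set.mem_insert_iff, mem_coe]
      tauto
    rw [hunion]
    refine numComponents_induce_union_add_one G (v := v) (by simp) (by simp) ?_ ?_
    · rintro u ⟨hu, hu'⟩
      simp only [coe_insert, Set.mem_insert_iff, mem_coe] at hu hu'
      by_contra huv
      exact disjoint_left.mp hpq (hu.resolve_left huv) (hu'.resolve_left huv)
    · intro u hu w hw huw
      simp only [coe_insert, Set.mem_insert_iff, mem_coe] at hu hw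
      by_contra! h
      exact hadj u (hu.resolve_left h.1) w (hw.resolve_left h.2) huw
  calc x * y * componentWeight G x y (insert v (p ∪ q))
      = x ^ (#(insert v (p ∪ q)) + 1) *
          y ^ (numComponents (G.induce (insert v (p ∪ q) : Finset V)) + 1) := by
        rw [componentWeight]
        ring
    _ = _ := by
        rw [hcard, hcomp, componentWeight, componentWeight]
        ring

end

theorem mul_Q_eq_of_separation [Fintype V] (G : SimpleGraph V) {v : V} {a b : Finset V}
    (hva : v ∉ a) (hvb : v ∉ b) (hab : Disjoint a b) (hadj : ∀ u ∈ a, ∀ w ∈ b, ¬G.Adj u w)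
    (hcover : insert v (a ∪ b) = univ) (x y : ℝ) :
    x * y * Q G x y =
      x * y * Q (G.induce a) x y * Q (G.induce b) x y +
        (Q (G.induce ↑(insert v a)) x y - Q (G.induce a) x y) *
          (Q (G.induce ↑(insert v b)) x y - Q (G.induce b) x y) := by
  simp only [Q_induce_eq_sum_componentWeight, toFinset_coe]
  rw [Q_eq_sum_componentWeight, ← hcover]
  exact mul_sum_powerset_insert_union hva hvb hab _ _
    (fun p hp q hq => componentWeight_union G x y (hab.mono hp hq)
      fun u hu w hw => hadj u (hp hu) w (hq hw))
    (fun p hp q hq => componentWeight_insert_union G x y (fun h => hva (hp h)) (fun h => hvb (hq h))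
      (hab.mono hp hq) fun u hu w hw => hadj u (hp hu) w (hq hw))

end

theorem stmt17_general {V : Type*} [Fintype V] (G : SimpleGraph V) (v : V) (A B : Set V)
    (hcover : A ∪ B = Set.univ) (hinter : A ∩ B = {v})
    (hedges : ∀ u w : V, G.Adj u w → (u ∈ A ∧ w ∈ A) ∨ (u ∈ B ∧ w ∈ B))
    (x y : ℝ) :
    x * y * Q G x y =
      x * y * Q (G.induce (A \ {v})) x y * Q (G.induce (B \ {v})) x y +
        (Q (G.induce A) x y - Q (G.induce (A \ {v})) x y) *
          (Q (G.induce B) x y - Q (G.induce (B \ {v})) x y) := by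
  have hv : v ∈ A ∩ B := hinter.symm.subset rfl
  have hAB (u : V) (huA : u ∈ A) (huB : u ∈ B) : u = v := hinter.subset ⟨huA, huB⟩
  obtain ⟨a, ha⟩ : ∃ a : Finset V, ↑a = A \ {v} := ⟨_, Set.coe_toFinset _⟩
  obtain ⟨b, hb⟩ : ∃ b : Finset V, ↑b = B \ {v} := ⟨_, Set.coe_toFinset _⟩
  have hA : A = ↑(insert v a) := by
    rw [coe_insert, ha, Set.insert_sdiff_singleton, Set.insert_eq_of_mem hv.1]
  have hB : B = ↑(insert v b) := by
    rw [coe_insert, hb, Set.insert_sdiff_singleton, Set.insert_eq_of_mem hv.2]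
  have hab : Disjoint a b := by
    rw [← disjoint_coe, ha, hb]
    exact Set.disjoint_left.mpr fun u ⟨huA, huv⟩ ⟨huB, _⟩ => huv (hAB u huA huB)
  have hadj : ∀ u ∈ a, ∀ w ∈ b, ¬G.Adj u w := by
    intro u hu w hw huw
    rw [← mem_coe, ha] at hu
    rw [← mem_coe, hb] at hw
    rcases hedges u w huw with ⟨-, hwA⟩ | ⟨huB, -⟩
    · exact hw.2 (hAB w hwA hw.1)
    · exact hu.2 (hAB u hu.1 huB)
  have huniv : insert v (a ∪ b) = univ := by
    rw [← coe_inj, coe_insert, coe_union, ha, hb, coe_univ, ← Set.union_sdiff_distrib,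
      Set.insert_sdiff_singleton, hcover, Set.insert_eq_of_mem (Set.mem_univ v)]
  rw [Q_induce_congr G ha.symm, Q_induce_congr G hb.symm, Q_induce_congr G hA,
    Q_induce_congr G hB]
  exact mul_Q_eq_of_separation G (by simp [← mem_coe, ha]) (by simp [← mem_coe, hb]) hab hadj
    huniv x y

theorem stmt17 {V : Type*} [Fintype V] (G : SimpleGraph V) (v : V) (A B : Set V)
    (hcover : A ∪ B = Set.univ) (hinter : A ∩ B = {v})
    (hedges : ∀ u w : V, G.Adj u w → (u ∈ A ∧ w ∈ A) ∨ (u ∈ B ∧ w ∈ B))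
    (harti : numComponents G < numComponents (G.induce ({v}ᶜ : Set V)))
    (x y : ℝ) :
    x * y * Q G x y =
      x * y * Q (G.induce (A \ {v})) x y * Q (G.induce (B \ {v})) x y +
        (Q (G.induce A) x y - Q (G.induce (A \ {v})) x y) *
          (Q (G.induce B) x y - Q (G.induce (B \ {v})) x y) :=
  stmt17_general G v A B hcover hinter hedges x y
end
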